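/- If x ∈ C_n(q,d,m,r) with d ≥ 2, m = w_{n+1}, 0 ≤ r < m, and x′ is obtained from x by deleting c ≤ d symbols, then the index I = M(x) − M(x′) is uniquely determined by M(x′), r, and m: I = r + m − M(x′) if M(x′) > r, and I = r − M(x′) if M(x′) ≤ r. -/

import Mathlib

/-!
Deleting symbols never increases the moment, since every surviving symbol moves to a position
of smaller weight. Conversely, passing to the complementary word `(q - 1) - xᵢ` shows that the
moment drops by at most `(q - 1)` times the sum of the last `c ≤ d` weights, which is
`w_{n+1} - 1` by the recursion. Since moreover `M(x) < 2 w_{n+1}`, the congruence forces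
`M(x) = r` or `M(x) = r + w_{n+1}`, and `M(x′)` decides which.
-/

/-- Weight sequence: `W p d i` = w_i(q,d) where p = q-1; w_i = 0 for i ≤ 0 (encoded by
ℕ truncated subtraction together with `W p d 0 = 0`), and w_i = 1 + p·∑_{j=1}^d w_{i-j}
for i ≥ 1. -/
def W (p d : ℕ) : ℕ → ℕ
  | 0 => 0
  | (i+1) => 1 + p * ∑ j ∈ Finset.range d, W p d (i - j)
decreasing_by exact Nat.lt_succ_of_le (Nat.sub_le i j)

/-- Moment of a word (1-indexed): M(x) = ∑_{i=1}^{n} w_i x_i. -/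
def moment (w : ℕ → ℕ) (x : List ℕ) : ℕ :=
  ∑ i ∈ Finset.range x.length, w (i + 1) * x.getD i 0

/-- Deleted word x^{(D)}: delete the symbols at the (1-indexed) positions in D,
keeping the remaining symbols in order. -/
def deleteD (x : List ℕ) (D : Finset ℕ) : List ℕ :=
  ((List.range x.length).filter (fun i => (i + 1) ∉ D)).map (fun i => x.getD i 0)

open Finset

@[simp] lemma moment_nil (w : ℕ → ℕ) : moment w [] = 0 := rfl

lemma moment_cons (w : ℕ → ℕ) (a : ℕ) (l : List ℕ) :
    moment w (a :: l) = w 1 * a + moment (fun i => w (i + 1)) l := by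
  simp only [moment, List.length_cons, sum_range_succ', List.getD_cons_succ, List.getD_cons_zero]
  ring

lemma moment_le_moment_of_le {w w' : ℕ → ℕ} (h : ∀ i, w i ≤ w' i) (l : List ℕ) :
    moment w l ≤ moment w' l :=
  sum_le_sum fun _ _ => Nat.mul_le_mul_right _ (h _)

lemma List.Sublist.moment_le {w : ℕ → ℕ} (hw : Monotone w) {l₁ l₂ : List ℕ}
    (h : l₁.Sublist l₂) : moment w l₁ ≤ moment w l₂ := by
  induction h generalizing w with
  | slnil => simp
  | cons _ _ ih =>
    rw [moment_cons]
    calc moment w _ ≤ moment (fun i => w (i + 1)) _ :=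
          moment_le_moment_of_le (fun i => hw (Nat.le_succ i)) _
      _ ≤ _ := ih (fun i j hij => hw (Nat.succ_le_succ hij))
      _ ≤ _ := Nat.le_add_left _ _
  | cons_cons _ _ ih =>
    rw [moment_cons, moment_cons]
    exact Nat.add_le_add_left (ih (fun i j hij => hw (Nat.succ_le_succ hij))) _

lemma moment_add_moment_map_sub (w : ℕ → ℕ) {p : ℕ} {l : List ℕ} (hl : ∀ a ∈ l, a ≤ p) :
    moment w l + moment w (l.map (p - ·)) = p * ∑ i ∈ range l.length, w (i + 1) := by
  rw [moment, moment, List.length_map, ← sum_add_distrib, mul_sum]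
  refine sum_congr rfl fun i hi => ?_
  have hi : i < l.length := mem_range.mp hi
  have hmap : (l.map (p - ·)).getD i 0 = p - l[i] := by simp [hi]
  rw [List.getD_eq_getElem _ _ hi, hmap, ← mul_add, Nat.add_sub_cancel' (hl _ (l.getElem_mem hi)),
    mul_comm]

lemma List.Sublist.moment_add_mul_sum_le {w : ℕ → ℕ} (hw : Monotone w) {p : ℕ}
    {l₁ l₂ : List ℕ} (h : l₁.Sublist l₂) (hl : ∀ a ∈ l₂, a ≤ p) :
    moment w l₂ + p * ∑ i ∈ Finset.range l₁.length, w (i + 1) ≤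
      moment w l₁ + p * ∑ i ∈ Finset.range l₂.length, w (i + 1) := by
  have h₁ := moment_add_moment_map_sub w fun a ha => hl a (h.subset ha)
  have h₂ := moment_add_moment_map_sub w hl
  have := (h.map (p - ·)).moment_le hw
  omega

lemma deleteD_sublist (x : List ℕ) (D : Finset ℕ) : (deleteD x D).Sublist x := by
  have hx : (List.range x.length).map (fun i => x.getD i 0) = x := by
    apply List.ext_getElem (by simp)
    intro i _ h
    simp [h]
  conv_rhs => rw [← hx]
  exact List.filter_sublist.map _

lemma length_le_length_deleteD_add_card (x : List ℕ) (D : Finset ℕ) :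
    x.length ≤ (deleteD x D).length + D.card := by
  set deleted := ((List.range x.length).filter (fun i => !decide ((i + 1) ∉ D))).map (· + 1)
  have hnodup : deleted.Nodup := (List.nodup_range.filter _).map (add_left_injective 1)
  have hsub : deleted.toFinset ⊆ D := by
    intro i
    simp only [deleted, List.mem_toFinset, List.mem_map, List.mem_filter]
    rintro ⟨j, ⟨-, hj⟩, rfl⟩
    simpa using hj
  have hsplit := List.length_eq_length_filter_add (l := List.range x.length) (· + 1 ∉ D)
  have hcard := card_le_card hsub
  rw [List.toFinset_card_of_nodup hnodup] at hcard
  simp only [deleteD, deleted, List.length_map, List.length_range] at hsplit hcard ⊢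
  omega

lemma sum_range_sub_add_sum_range {f : ℕ → ℕ} (hf : f 0 = 0) (e N : ℕ) :
    ∑ j ∈ range e, f (N - j) + ∑ k ∈ range (N - e), f (k + 1) = ∑ k ∈ range N, f (k + 1) := by
  induction e with
  | zero => simp
  | succ e ih =>
    have hstep : f (N - e) + ∑ k ∈ range (N - (e + 1)), f (k + 1) =
        ∑ k ∈ range (N - e), f (k + 1) := by
      rcases h : N - e with _ | t
      · simp [hf, show N - (e + 1) = 0 by omega]
      · rw [show N - (e + 1) = t by omega, sum_range_succ, add_comm]
    rw [sum_range_succ, add_assoc, hstep, ih]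

section Weights

variable {p d : ℕ}

lemma W_zero : W p d 0 = 0 := by rw [W]

lemma W_succ (i : ℕ) : W p d (i + 1) = 1 + p * ∑ j ∈ range d, W p d (i - j) := by rw [W]

lemma W_monotone (p d : ℕ) : Monotone (W p d) := by
  refine monotone_nat_of_le_succ fun i => ?_
  induction i using Nat.strong_induction_on with
  | _ i ih =>
    rcases i with _ | i
    · simp [W_zero]
    · rw [W_succ, W_succ]
      gcongr with j
      rcases le_or_gt j i with hji | hji
      · rw [show i + 1 - j = i - j + 1 by omega]
        exact ih (i - j) (by omega)
      · simp [show i - j = 0 by omega, W_zero]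

lemma W_succ_add_mul_sum (N : ℕ) :
    W p d (N + 1) + p * ∑ k ∈ range (N - d), W p d (k + 1) =
      p * ∑ k ∈ range N, W p d (k + 1) + 1 := by
  rw [W_succ, ← sum_range_sub_add_sum_range W_zero d N]
  ring

lemma W_add_W_lt_W (hp : 1 ≤ p) (hd : 2 ≤ d) (N : ℕ) :
    W p d (N + 1) + W p d N < W p d (N + 2) := by
  have h : W p d (N + 1) + W p d N ≤ ∑ j ∈ range d, W p d (N + 1 - j) := by
    calc W p d (N + 1) + W p d N = ∑ j ∈ range 2, W p d (N + 1 - j) := by simp [sum_range_succ]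
      _ ≤ _ := sum_le_sum_of_subset (range_subset_range.2 hd)
  rw [W_succ (N + 1)]
  nlinarith

lemma mul_sum_W_sub_le (hp : 1 ≤ p) (hd : 2 ≤ d) (N : ℕ) :
    p * ∑ k ∈ range (N - d), W p d (k + 1) ≤ W p d N := by
  induction N using Nat.strong_induction_on with
  | _ N ih =>
    rcases h : N - d with _ | M
    · simp
    · have hM := W_succ_add_mul_sum (p := p) (d := d) (M + 1)
      have := ih (M + 1) (by omega)
      have := W_add_W_lt_W hp hd (M + 1)
      have := W_monotone p d (show M + 1 + 2 ≤ N by omega)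
      omega

lemma mul_sum_W_lt_two_mul (hp : 1 ≤ p) (hd : 2 ≤ d) (N : ℕ) :
    p * ∑ k ∈ range N, W p d (k + 1) < 2 * W p d (N + 1) := by
  have := W_succ_add_mul_sum (p := p) (d := d) N
  have := mul_sum_W_sub_le hp hd N
  have := W_monotone p d (show N ≤ N + 1 by omega)
  omega

end Weights

lemma eq_mod_or_eq_add_mod_of_lt_two_mul {a m : ℕ} (h : a < 2 * m) :
    a = a % m ∨ a = m + a % m := by
  rcases lt_or_ge a m with ham | ham
  · exact .inl (Nat.mod_eq_of_lt ham).symm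
  · rw [Nat.mod_eq_sub_mod ham, Nat.mod_eq_of_lt (by omega)]
    omega

section Codes

variable {p d : ℕ}

lemma moment_W_lt_two_mul (hp : 1 ≤ p) (hd : 2 ≤ d) {x : List ℕ} (hx : ∀ a ∈ x, a ≤ p) :
    moment (W p d) x < 2 * W p d (x.length + 1) := by
  have := moment_add_moment_map_sub (W p d) hx
  have := mul_sum_W_lt_two_mul hp hd x.length
  omega

lemma moment_W_lt_moment_deleteD_add {x : List ℕ} (hx : ∀ a ∈ x, a ≤ p) {D : Finset ℕ}
    (hD : D.card ≤ d) :
    moment (W p d) x < moment (W p d) (deleteD x D) + W p d (x.length + 1) := by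
  have hloss := (deleteD_sublist x D).moment_add_mul_sum_le (W_monotone p d) hx
  have hlen := length_le_length_deleteD_add_card x D
  have hprefix : ∑ k ∈ range (x.length - d), W p d (k + 1) ≤
      ∑ k ∈ range (deleteD x D).length, W p d (k + 1) :=
    sum_le_sum_of_subset (range_subset_range.2 (by omega))
  have := W_succ_add_mul_sum (p := p) (d := d) x.length
  have := Nat.mul_le_mul_left p hprefix
  omega

end Codes

theorem index_determined_general (q d n r c : ℕ) (hq : 2 ≤ q) (hd : 2 ≤ d)
    (x : List ℕ) (hlen : x.length = n) (hx : ∀ a ∈ x, a < q)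
    (hcode : moment (W (q - 1) d) x % W (q - 1) d (n + 1) = r)
    (D : Finset ℕ) (hcard : D.card = c) (hc : c ≤ d) :
    (r < moment (W (q - 1) d) (deleteD x D) →
      (moment (W (q - 1) d) x : ℤ) - (moment (W (q - 1) d) (deleteD x D) : ℤ) =
        (r : ℤ) + (W (q - 1) d (n + 1) : ℤ) - (moment (W (q - 1) d) (deleteD x D) : ℤ)) ∧
    (moment (W (q - 1) d) (deleteD x D) ≤ r →
      (moment (W (q - 1) d) x : ℤ) - (moment (W (q - 1) d) (deleteD x D) : ℤ) =
        (r : ℤ) - (moment (W (q - 1) d) (deleteD x D) : ℤ)) := by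
  subst hlen hcode
  have hp : 1 ≤ q - 1 := by omega
  have hx' : ∀ a ∈ x, a ≤ q - 1 := fun a ha => Nat.le_sub_one_of_lt (hx a ha)
  have hdrop := (deleteD_sublist x D).moment_le (W_monotone (q - 1) d)
  have hloss := moment_W_lt_moment_deleteD_add hx' (hcard ▸ hc : D.card ≤ d)
  have hcases := eq_mod_or_eq_add_mod_of_lt_two_mul (moment_W_lt_two_mul hp hd hx')
  constructor <;> intro <;> omega

theorem index_determined (q d n r c : ℕ) (hq : 2 ≤ q) (hd : 2 ≤ d)
    (hr : r < W (q - 1) d (n + 1))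
    (x : List ℕ) (hlen : x.length = n) (hx : ∀ a ∈ x, a < q)
    (hcode : moment (W (q - 1) d) x % W (q - 1) d (n + 1) = r)
    (D : Finset ℕ) (hD : D ⊆ Finset.Icc 1 n) (hcard : D.card = c) (hc : c ≤ d) :
    (r < moment (W (q - 1) d) (deleteD x D) →
      (moment (W (q - 1) d) x : ℤ) - (moment (W (q - 1) d) (deleteD x D) : ℤ) =
        (r : ℤ) + (W (q - 1) d (n + 1) : ℤ) - (moment (W (q - 1) d) (deleteD x D) : ℤ)) ∧
    (moment (W (q - 1) d) (deleteD x D) ≤ r →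
      (moment (W (q - 1) d) x : ℤ) - (moment (W (q - 1) d) (deleteD x D) : ℤ) =
        (r : ℤ) - (moment (W (q - 1) d) (deleteD x D) : ℤ)) :=
  index_determined_general q d n r c hq hd x hlen hx hcode D hcard hc
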